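/- Let q, p₀ ∈ S_n with p₀ ≠ q, and define η_ng(t) = η_q + e^{−t}·(η_{p₀} − η_q) for t ≥ 0 (the solution of the natural gradient flow η' = −(η − η_q) with η(0) = η_{p₀}). Then η_ng(t) ∈ Δ_n for all t ≥ 0, and there exist constants c₁, c₂ > 0 such that c₁·e^{−2t} ≤ L_q(η_ng(t)) ≤ c₂·e^{−2t} for all t ≥ 0; i.e., L_q(η_ng(t)) converges to zero exponentially with rate exactly 2. -/

import Mathlib

open Filter

noncomputable section

abbrev E (n : ℕ) := EuclideanSpace ℝ (Fin n)

/-- The open probability simplex `S_n` inside `ℝ^{n+1}`. -/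
def simplex (n : ℕ) : Set (Fin (n+1) → ℝ) :=
  {p | (∀ i, 0 < p i) ∧ ∑ i, p i = 1}

/-- The mixture (`η`) coordinate domain `Δ_n`. -/
def Δset (n : ℕ) : Set (E n) := {η | (∀ i, 0 < η i) ∧ ∑ i, η i < 1}

/-- The distribution in `S_n` corresponding to `η` coordinates. -/
def mixDist {n : ℕ} (η : E n) : Fin (n+1) → ℝ :=
  Fin.snoc (fun i => η i) (1 - ∑ i, η i)

/-- The distribution in `S_n` corresponding to `θ` coordinates. -/
def expDist {n : ℕ} (θ : E n) : Fin (n+1) → ℝ :=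
  Fin.snoc (fun i => Real.exp (θ i) / (1 + ∑ j, Real.exp (θ j)))
    (1 / (1 + ∑ j, Real.exp (θ j)))

/-- The `η` coordinates of a distribution `q ∈ S_n`. -/
def etaCoord {n : ℕ} (q : Fin (n+1) → ℝ) : E n := WithLp.toLp 2 (fun i : Fin n => q i.castSucc)

/-- The `θ` coordinates of a distribution `q ∈ S_n`. -/
def thetaCoord {n : ℕ} (q : Fin (n+1) → ℝ) : E n :=
  WithLp.toLp 2 (fun i : Fin n => Real.log (q i.castSucc / q (Fin.last n)))

/-- Kullback–Leibler divergence `D(q‖p)`. -/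
def KL {n : ℕ} (q p : Fin (n+1) → ℝ) : ℝ := ∑ i, q i * Real.log (q i / p i)

/-- Log-partition function `ψ(θ) = log(1 + Σ e^{θ_i})`. -/
def psi {n : ℕ} (θ : E n) : ℝ := Real.log (1 + ∑ i, Real.exp (θ i))

/-- Negative entropy `φ(η)`. -/
def phi {n : ℕ} (η : E n) : ℝ :=
  (∑ i, η i * Real.log (η i)) + (1 - ∑ i, η i) * Real.log (1 - ∑ i, η i)

/-- The loss `L_q` in `η` coordinates: `η ↦ D(q ‖ p(η))`. -/
def Leta {n : ℕ} (q : Fin (n+1) → ℝ) (η : E n) : ℝ := KL q (mixDist η)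

/-- The loss `L_q` in `θ` coordinates: `θ ↦ D(q ‖ p(θ))`. -/
def Ltheta {n : ℕ} (q : Fin (n+1) → ℝ) (θ : E n) : ℝ := KL q (expDist θ)

/-- The Hessian of `f : ℝⁿ → ℝ` at `x`, as the `n × n` matrix of second partial
derivatives. -/
def hess {n : ℕ} (f : E n → ℝ) (x : E n) : Matrix (Fin n) (Fin n) ℝ :=
  Matrix.of fun i j =>
    fderiv ℝ (fun y => fderiv ℝ f y (EuclideanSpace.single j 1)) x (EuclideanSpace.single i 1)

/-- The set of (real) eigenvalues of a matrix. -/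
def lamSet {n : ℕ} (A : Matrix (Fin n) (Fin n) ℝ) : Set ℝ :=
  {μ | ∃ v : Fin n → ℝ, v ≠ 0 ∧ A.mulVec v = μ • v}

/-- Largest eigenvalue `λ_max`. -/
def lamMax {n : ℕ} (A : Matrix (Fin n) (Fin n) ℝ) : ℝ := sSup (lamSet A)

/-- Smallest eigenvalue `λ_min`. -/
def lamMin {n : ℕ} (A : Matrix (Fin n) (Fin n) ℝ) : ℝ := sInf (lamSet A)

/-- Condition number `cond(A) = λ_max(A)/λ_min(A)`. -/
def condNum {n : ℕ} (A : Matrix (Fin n) (Fin n) ℝ) : ℝ := lamMax A / lamMin A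

/-- Operator 2-norm of a matrix (induced by the Euclidean norm). -/
def opNorm {n : ℕ} (A : Matrix (Fin n) (Fin n) ℝ) : ℝ :=
  ‖Matrix.toEuclideanCLM (𝕜 := ℝ) A‖


/-!
Write `s = e^{-t} ∈ (0, 1]`. Since `η ↦ p(η)` is affine, the trajectory is the segment
`p_s = q + s (p₀ - q)` of `S_n`. Termwise, `log x ≤ x - 1` squeezes `D(q‖p)` between the squared
Hellinger distance `∑ (√pᵢ - √qᵢ)² ≥ ∑ (pᵢ - qᵢ)² / 4` and the χ²-divergence `∑ (pᵢ - qᵢ)² / pᵢ`.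
Along the segment `pᵢ - qᵢ = s (p₀ᵢ - qᵢ)` and `pᵢ ≥ min qᵢ p₀ᵢ`, so both bounds are of order `s²`.
-/

open Finset Real

variable {n : ℕ}

lemma convex_simplex (n : ℕ) : Convex ℝ (simplex n) := by
  rintro p ⟨hp, hp1⟩ q ⟨hq, hq1⟩ a b ha hb hab
  refine ⟨fun i => convex_Ioi (0 : ℝ) (hp i) (hq i) ha hb hab, ?_⟩
  simp only [Pi.add_apply, Pi.smul_apply, smul_eq_mul, sum_add_distrib, ← mul_sum, hp1, hq1,
    mul_one, hab]

lemma le_one_of_mem_simplex {p : Fin (n + 1) → ℝ} (hp : p ∈ simplex n) (i : Fin (n + 1)) :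
    p i ≤ 1 :=
  hp.2 ▸ single_le_sum (fun j _ => (hp.1 j).le) (mem_univ i)

lemma etaCoord_add_smul_sub (q p : Fin (n + 1) → ℝ) (s : ℝ) :
    etaCoord q + s • (etaCoord p - etaCoord q) = etaCoord (q + s • (p - q)) := by
  ext i
  simp [etaCoord]

lemma sum_etaCoord (p : Fin (n + 1) → ℝ) : ∑ i, etaCoord p i = ∑ i, p i - p (Fin.last n) := by
  rw [Fin.sum_univ_castSucc]
  simp [etaCoord]

lemma mixDist_etaCoord {p : Fin (n + 1) → ℝ} (hp : ∑ i, p i = 1) : mixDist (etaCoord p) = p := by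
  funext i
  induction i using Fin.lastCases with
  | last => simp [mixDist, sum_etaCoord, hp]
  | cast i => simp [mixDist, etaCoord]

lemma etaCoord_mem_Δset {p : Fin (n + 1) → ℝ} (hp : p ∈ simplex n) : etaCoord p ∈ Δset n :=
  ⟨fun i => hp.1 i.castSucc, by rw [sum_etaCoord, hp.2]; linarith [hp.1 (Fin.last n)]⟩

lemma mul_log_div_add_sub_le {p q : ℝ} (hp : 0 < p) (hq : 0 < q) :
    q * log (q / p) + p - q ≤ (p - q) ^ 2 / p := by
  have hlog : q * log (q / p) ≤ q * (q / p - 1) :=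
    mul_le_mul_of_nonneg_left (log_le_sub_one_of_pos (div_pos hq hp)) hq.le
  have hid : (p - q) ^ 2 / p = q * (q / p - 1) + p - q := by field_simp; ring
  linarith

lemma sq_sqrt_sub_sqrt_le_mul_log_div_add_sub {p q : ℝ} (hp : 0 < p) (hq : 0 < q) :
    (√p - √q) ^ 2 ≤ q * log (q / p) + p - q := by
  obtain ⟨a, ha, rfl⟩ : ∃ a, 0 < a ∧ a ^ 2 = p := ⟨√p, sqrt_pos.2 hp, sq_sqrt hp.le⟩
  obtain ⟨b, hb, rfl⟩ : ∃ b, 0 < b ∧ b ^ 2 = q := ⟨√q, sqrt_pos.2 hq, sq_sqrt hq.le⟩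
  have hlog : 1 - a / b ≤ log (b / a) := by
    simpa only [inv_div] using one_sub_inv_le_log_of_pos (div_pos hb ha)
  have hid : b ^ 2 * (1 - a / b) = b ^ 2 - a * b := by field_simp
  rw [sqrt_sq ha.le, sqrt_sq hb.le, ← div_pow, log_pow]
  nlinarith [mul_le_mul_of_nonneg_left hlog (sq_nonneg b)]

lemma sq_sub_le_four_mul_sq_sqrt_sub_sqrt {p q : ℝ} (hp : 0 ≤ p) (hq : 0 ≤ q) (hp1 : p ≤ 1)
    (hq1 : q ≤ 1) : (p - q) ^ 2 ≤ 4 * (√p - √q) ^ 2 := by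
  have hfac : (p - q) ^ 2 = (√p + √q) ^ 2 * (√p - √q) ^ 2 := by
    rw [← mul_pow]
    congr 1
    linear_combination (sq_sqrt hp).symm - (sq_sqrt hq).symm
  have hsum : (√p + √q) ^ 2 ≤ 4 := by
    nlinarith [sqrt_le_one.2 hp1, sqrt_le_one.2 hq1, sqrt_nonneg p, sqrt_nonneg q]
  rw [hfac]
  exact mul_le_mul_of_nonneg_right hsum (sq_nonneg _)

section KL

variable {q p : Fin (n + 1) → ℝ}

lemma KL_eq_sum_mul_log_div_add_sub (h : ∑ i, p i = ∑ i, q i) :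
    KL q p = ∑ i, (q i * log (q i / p i) + p i - q i) := by
  simp only [KL, add_sub_assoc, sum_add_distrib, sum_sub_distrib, h, sub_self, add_zero]

lemma sum_sq_sub_div_four_le_KL (hq : q ∈ simplex n) (hp : p ∈ simplex n) :
    ∑ i, (p i - q i) ^ 2 / 4 ≤ KL q p := by
  rw [KL_eq_sum_mul_log_div_add_sub (hp.2.trans hq.2.symm)]
  refine sum_le_sum fun i _ => ?_
  have := sq_sub_le_four_mul_sq_sqrt_sub_sqrt (hp.1 i).le (hq.1 i).le
    (le_one_of_mem_simplex hp i) (le_one_of_mem_simplex hq i)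
  linarith [sq_sqrt_sub_sqrt_le_mul_log_div_add_sub (hp.1 i) (hq.1 i)]

lemma KL_le_sum_sq_sub_div (hq : q ∈ simplex n) (hp : p ∈ simplex n) :
    KL q p ≤ ∑ i, (p i - q i) ^ 2 / p i := by
  rw [KL_eq_sum_mul_log_div_add_sub (hp.2.trans hq.2.symm)]
  exact sum_le_sum fun i _ => mul_log_div_add_sub_le (hp.1 i) (hq.1 i)

lemma sum_sq_sub_div_pos {w : Fin (n + 1) → ℝ} (hne : p ≠ q) (hw : ∀ i, 0 < w i) :
    0 < ∑ i, (p i - q i) ^ 2 / w i := by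
  obtain ⟨i, hi⟩ := Function.ne_iff.mp hne
  exact sum_pos' (fun j _ => div_nonneg (sq_nonneg _) (hw j).le)
    ⟨i, mem_univ i, div_pos (sq_pos_of_ne_zero (sub_ne_zero.2 hi)) (hw i)⟩

lemma sum_sq_sub_div_four_mul_sq_le_KL_add_smul_sub (hq : q ∈ simplex n) (hp : p ∈ simplex n)
    {s : ℝ} (hs : s ∈ Set.Icc (0 : ℝ) 1) :
    (∑ i, (p i - q i) ^ 2 / 4) * s ^ 2 ≤ KL q (q + s • (p - q)) := by
  refine le_of_eq_of_le ?_
    (sum_sq_sub_div_four_le_KL hq ((convex_simplex n).add_smul_sub_mem hq hp hs))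
  rw [sum_mul]
  refine sum_congr rfl fun i _ => ?_
  simp only [Pi.add_apply, Pi.smul_apply, Pi.sub_apply, smul_eq_mul, add_sub_cancel_left]
  ring

lemma KL_add_smul_sub_le (hq : q ∈ simplex n) (hp : p ∈ simplex n) {s : ℝ}
    (hs : s ∈ Set.Icc (0 : ℝ) 1) :
    KL q (q + s • (p - q)) ≤ (∑ i, (p i - q i) ^ 2 / min (q i) (p i)) * s ^ 2 := by
  refine (KL_le_sum_sq_sub_div hq ((convex_simplex n).add_smul_sub_mem hq hp hs)).trans ?_
  rw [sum_mul]
  refine sum_le_sum fun i _ => ?_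
  have hmin : min (q i) (p i) ≤ q i + s * (p i - q i) := by
    linarith [mul_le_mul_of_nonneg_left (min_le_left (q i) (p i)) (sub_nonneg.2 hs.2),
      mul_le_mul_of_nonneg_left (min_le_right (q i) (p i)) hs.1]
  simp only [Pi.add_apply, Pi.smul_apply, Pi.sub_apply, smul_eq_mul, add_sub_cancel_left]
  rw [mul_pow, div_mul_eq_mul_div, mul_comm]
  gcongr
  exact lt_min (hq.1 i) (hp.1 i)

end KL

/-- The natural gradient flow trajectory stays in `Δ_n` and converges with
rate exactly 2. -/
theorem stmt_8 {n : ℕ} (q p₀ : Fin (n+1) → ℝ)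
    (hq : q ∈ simplex n) (hp₀ : p₀ ∈ simplex n) (hne : p₀ ≠ q) :
    (∀ t ≥ (0 : ℝ),
      etaCoord q + Real.exp (-t) • (etaCoord p₀ - etaCoord q) ∈ Δset n) ∧
    ∃ c₁ c₂ : ℝ, 0 < c₁ ∧ 0 < c₂ ∧
      ∀ t ≥ (0 : ℝ),
        c₁ * Real.exp (-2 * t) ≤
          Leta q (etaCoord q + Real.exp (-t) • (etaCoord p₀ - etaCoord q)) ∧
        Leta q (etaCoord q + Real.exp (-t) • (etaCoord p₀ - etaCoord q)) ≤
          c₂ * Real.exp (-2 * t) := by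
  have hs : ∀ t ≥ (0 : ℝ), exp (-t) ∈ Set.Icc (0 : ℝ) 1 :=
    fun t ht => ⟨(exp_pos _).le, exp_le_one_iff.2 (neg_nonpos.2 ht)⟩
  have hpath : ∀ t ≥ (0 : ℝ), q + exp (-t) • (p₀ - q) ∈ simplex n :=
    fun t ht => (convex_simplex n).add_smul_sub_mem hq hp₀ (hs t ht)
  refine ⟨fun t ht => ?_, _, _, sum_sq_sub_div_pos hne fun _ => four_pos,
    sum_sq_sub_div_pos hne fun i => lt_min (hq.1 i) (hp₀.1 i), fun t ht => ?_⟩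
  · rw [etaCoord_add_smul_sub]
    exact etaCoord_mem_Δset (hpath t ht)
  · rw [etaCoord_add_smul_sub, Leta, mixDist_etaCoord (hpath t ht).2,
      show exp (-2 * t) = exp (-t) ^ 2 by rw [← exp_nat_mul]; ring_nf]
    exact ⟨sum_sq_sub_div_four_mul_sq_le_KL_add_smul_sub hq hp₀ (hs t ht),
      KL_add_smul_sub_le hq hp₀ (hs t ht)⟩
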